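/- The 'discrete' q-Laplace transformation satisfies z L_{q,1}^{[d]}(δ_q g) = p L_{q,1}^{[d]}(ζ g) − p z L_{q,1}^{[d]}(g), where p = 1/q, for any g analytic along the discrete q-spiral q^ℤ e^{id} with q-exponential growth ensuring convergence of all series involved. -/

import Mathlib

open scoped BigOperators
noncomputable section

/-- The q-factorial `[n]_q! = ∏_{l=1}^n (q^l - 1)/(q - 1)`. -/
def qFact (q : ℝ) (n : ℕ) : ℝ := ∏ l ∈ Finset.range n, (q ^ (l + 1) - 1) / (q - 1)

/-- The q-exponential `e_q(w) = Σ_{n≥0} w^n/[n]_q!`. -/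
def qExp (q : ℝ) (w : ℂ) : ℂ := ∑' n : ℕ, w ^ n / (qFact q n : ℂ)

/-- The "discrete" q-Laplace transform of order 1 in direction `d` (a Jackson-integral sum):
`L_{q,1}^{[d]}(g)(z) = (q−1) e^{id} Σ_{l∈ℤ} q^l g(q^l e^{id}) / (z e_q(q^{l+1} e^{id}/z))`. -/
def qLaplace (q d : ℝ) (g : ℂ → ℂ) (z : ℂ) : ℂ :=
  ((q : ℂ) - 1) * Complex.exp (Complex.I * d) *
    ∑' l : ℤ, (q : ℂ) ^ l * g ((q : ℂ) ^ l * Complex.exp (Complex.I * d)) /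
      (z * qExp q ((q : ℂ) ^ (l + 1) * Complex.exp (Complex.I * d) / z))

/-!
Write `ζₗ = qˡ e^{id}`. Since `δ_q g(ζₗ) = (g(ζₗ₊₁) - g(ζₗ))/(q - 1)`, the transform of `δ_q g` is,
up to the factor `1/(q - 1)`, the difference of the transforms of `ζ ↦ g(qζ)` and of `g`. In the
Jackson sum of the former, shift `l ↦ l + 1` and rewrite the kernel by the functional equation
`e_q(qx) = (1 + (q - 1)x) e_q(x)`: the factor `1 + (q - 1) ζₗ / z` splits it into
`p L(g) + p (q - 1)/z · L(ζ g)`.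
-/

lemma qFact_succ (q : ℝ) (n : ℕ) :
    qFact q (n + 1) = qFact q n * ((q ^ (n + 1) - 1) / (q - 1)) :=
  Finset.prod_range_succ _ _

lemma factorial_le_qFact {q : ℝ} (hq : 1 < q) (n : ℕ) : (n.factorial : ℝ) ≤ qFact q n := by
  rw [qFact, ← Finset.prod_range_add_one_eq_factorial, Nat.cast_prod]
  refine Finset.prod_le_prod (fun _ _ => by positivity) fun l _ => ?_
  rw [← geom_sum_eq hq.ne']
  calc ((l + 1 : ℕ) : ℝ) = ∑ _i ∈ Finset.range (l + 1), (1 : ℝ) := by simp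
    _ ≤ ∑ i ∈ Finset.range (l + 1), q ^ i :=
      Finset.sum_le_sum fun i _ => one_le_pow₀ hq.le

lemma qFact_pos {q : ℝ} (hq : 1 < q) (n : ℕ) : 0 < qFact q n :=
  (Nat.cast_pos.mpr n.factorial_pos).trans_le (factorial_le_qFact hq n)

lemma summable_qExp {q : ℝ} (hq : 1 < q) (w : ℂ) :
    Summable fun n : ℕ => w ^ n / (qFact q n : ℂ) := by
  refine (Real.summable_pow_div_factorial ‖w‖).of_norm_bounded fun n => ?_
  rw [norm_div, norm_pow, Complex.norm_real, Real.norm_of_nonneg (qFact_pos hq n).le]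
  exact div_le_div_of_nonneg_left (by positivity) (Nat.cast_pos.mpr n.factorial_pos)
    (factorial_le_qFact hq n)

lemma qExp_q_mul {q : ℝ} (hq : 1 < q) (w : ℂ) :
    qExp q (q * w) = (1 + (q - 1) * w) * qExp q w := by
  have hterm (n : ℕ) : ((q : ℂ) * w) ^ (n + 1) / (qFact q (n + 1) : ℂ) =
      w ^ (n + 1) / (qFact q (n + 1) : ℂ) + (q - 1) * w * (w ^ n / (qFact q n : ℂ)) := by
    have hqn : (q : ℂ) ^ (n + 1) - 1 ≠ 0 :=
      sub_ne_zero.mpr (by exact_mod_cast (one_lt_pow₀ hq n.succ_ne_zero).ne')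
    have hf : (qFact q n : ℂ) ≠ 0 := by exact_mod_cast (qFact_pos hq n).ne'
    rw [qFact_succ]
    push_cast
    field_simp
    ring
  have hs := summable_qExp hq w
  rw [qExp, qExp, (summable_qExp hq _).tsum_eq_zero_add, hs.tsum_eq_zero_add]
  simp only [hterm]
  rw [((summable_nat_add_iff 1).mpr hs).tsum_add (hs.mul_left _), tsum_mul_left,
    hs.tsum_eq_zero_add]
  simp only [pow_zero]
  ring

lemma div_mul_qExp_eq_div_mul_qExp_q_mul {q : ℝ} (hq : 1 < q) (a z x : ℂ)
    (hden : qExp q (q * x) ≠ 0) :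
    a / (z * qExp q x) = a * (1 + (q - 1) * x) / (z * qExp q (q * x)) := by
  rw [qExp_q_mul hq] at hden ⊢
  rw [mul_left_comm z, mul_comm a, mul_div_mul_left _ _ (left_ne_zero_of_mul hden)]

def qLaplaceTerm (q d : ℝ) (g : ℂ → ℂ) (z : ℂ) (l : ℤ) : ℂ :=
  (q : ℂ) ^ l * g ((q : ℂ) ^ l * Complex.exp (Complex.I * d)) /
    (z * qExp q ((q : ℂ) ^ (l + 1) * Complex.exp (Complex.I * d) / z))

section

variable {q d : ℝ} {g : ℂ → ℂ} {z : ℂ}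

lemma qLaplace_eq_tsum :
    qLaplace q d g z = ((q : ℂ) - 1) * Complex.exp (Complex.I * d) * ∑' l, qLaplaceTerm q d g z l :=
  rfl

lemma qLaplaceTerm_dilate_eq_qDiff (hq : q ≠ 1) (l : ℤ) :
    qLaplaceTerm q d (fun ζ => g (q * ζ)) z l =
      (q - 1) * qLaplaceTerm q d (fun ζ => (g (q * ζ) - g ζ) / (q - 1)) z l +
        qLaplaceTerm q d g z l := by
  have hq1 : (q : ℂ) - 1 ≠ 0 := sub_ne_zero.mpr (by exact_mod_cast hq)
  simp only [qLaplaceTerm]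
  field_simp
  ring

lemma qLaplaceTerm_dilate_eq_shift (hq : 1 < q) (l : ℤ)
    (hden : qExp q ((q : ℂ) ^ (l + 1 + 1) * Complex.exp (Complex.I * d) / z) ≠ 0) :
    q * qLaplaceTerm q d (fun ζ => g (q * ζ)) z l =
      qLaplaceTerm q d g z (l + 1) +
        (q - 1) / z * qLaplaceTerm q d (fun ζ => ζ * g ζ) z (l + 1) := by
  have hq0 : (q : ℂ) ≠ 0 := by exact_mod_cast (zero_lt_one.trans hq).ne'
  have hsucc : (q : ℂ) ^ (l + 1 + 1) * Complex.exp (Complex.I * d) / z =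
      q * ((q : ℂ) ^ (l + 1) * Complex.exp (Complex.I * d) / z) := by
    rw [zpow_add_one₀ hq0]; ring
  have hζ : (q : ℂ) * ((q : ℂ) ^ l * Complex.exp (Complex.I * d)) =
      (q : ℂ) ^ (l + 1) * Complex.exp (Complex.I * d) := by
    rw [zpow_add_one₀ hq0]; ring
  rw [hsucc] at hden
  simp only [qLaplaceTerm]
  rw [div_mul_qExp_eq_div_mul_qExp_q_mul hq _ _ _ hden, hsucc, hζ, zpow_add_one₀ hq0]
  ring

lemma tsum_qLaplaceTerm_dilate (hq : 1 < q)
    (hden : ∀ l : ℤ, qExp q ((q : ℂ) ^ (l + 1) * Complex.exp (Complex.I * d) / z) ≠ 0)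
    (hg : Summable (qLaplaceTerm q d g z))
    (hζg : Summable (qLaplaceTerm q d (fun ζ => ζ * g ζ) z)) :
    q * ∑' l, qLaplaceTerm q d (fun ζ => g (q * ζ)) z l =
      ∑' l, qLaplaceTerm q d g z l +
        (q - 1) / z * ∑' l, qLaplaceTerm q d (fun ζ => ζ * g ζ) z l := by
  calc _ = ∑' l : ℤ, (qLaplaceTerm q d g z (l + 1) +
          (q - 1) / z * qLaplaceTerm q d (fun ζ => ζ * g ζ) z (l + 1)) := by
        rw [← tsum_mul_left]
        exact tsum_congr fun l => qLaplaceTerm_dilate_eq_shift hq l (hden (l + 1))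
    _ = ∑' l : ℤ, (qLaplaceTerm q d g z l +
          (q - 1) / z * qLaplaceTerm q d (fun ζ => ζ * g ζ) z l) :=
        (Equiv.addRight (1 : ℤ)).tsum_eq fun l =>
          qLaplaceTerm q d g z l + (q - 1) / z * qLaplaceTerm q d (fun ζ => ζ * g ζ) z l
    _ = _ := by rw [hg.tsum_add (hζg.mul_left _), tsum_mul_left]

lemma mul_tsum_qLaplaceTerm_qDiff (hq : 1 < q) (hz : z ≠ 0)
    (hden : ∀ l : ℤ, qExp q ((q : ℂ) ^ (l + 1) * Complex.exp (Complex.I * d) / z) ≠ 0)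
    (hg : Summable (qLaplaceTerm q d g z))
    (hζg : Summable (qLaplaceTerm q d (fun ζ => ζ * g ζ) z))
    (hδg : Summable (qLaplaceTerm q d (fun ζ => (g (q * ζ) - g ζ) / (q - 1)) z)) :
    z * (q * ∑' l, qLaplaceTerm q d (fun ζ => (g (q * ζ) - g ζ) / (q - 1)) z l +
        ∑' l, qLaplaceTerm q d g z l) =
      ∑' l, qLaplaceTerm q d (fun ζ => ζ * g ζ) z l := by
  have hq1 : (q : ℂ) - 1 ≠ 0 := sub_ne_zero.mpr (by exact_mod_cast hq.ne')
  have hdilate := tsum_qLaplaceTerm_dilate hq hden hg hζg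
  simp only [qLaplaceTerm_dilate_eq_qDiff hq.ne'] at hdilate
  rw [(hδg.mul_left _).tsum_add hg, tsum_mul_left] at hdilate
  rw [mul_comm, ← eq_div_iff hz]
  exact mul_left_cancel₀ hq1 (by linear_combination hdilate)

end

/-- The discrete q-Laplace transform satisfies
`z L_{q,1}^{[d]}(δ_q g) = p L_{q,1}^{[d]}(ζ g) − p z L_{q,1}^{[d]}(g)` with `p = 1/q`,
where `δ_q g(ζ) = (g(qζ) − g(ζ))/(q−1)`, for `g` analytic along the discrete q-spiral with
q-exponential growth ensuring convergence (formalized by nonvanishing of the denominators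
and absolute summability of the series involved). -/
theorem qLaplace_delta_parts (q d : ℝ) (hq : 1 < q) (g : ℂ → ℂ) (z : ℂ) (hz : z ≠ 0)
    (hden : ∀ l : ℤ, qExp q ((q : ℂ) ^ (l + 1) * Complex.exp (Complex.I * d) / z) ≠ 0)
    (hsum : Summable fun l : ℤ =>
      ‖(q : ℂ) ^ l * g ((q : ℂ) ^ l * Complex.exp (Complex.I * d)) /
        (z * qExp q ((q : ℂ) ^ (l + 1) * Complex.exp (Complex.I * d) / z))‖)
    (hsum' : Summable fun l : ℤ =>
      ‖(q : ℂ) ^ l * ((q : ℂ) ^ l * Complex.exp (Complex.I * d) *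
          g ((q : ℂ) ^ l * Complex.exp (Complex.I * d))) /
        (z * qExp q ((q : ℂ) ^ (l + 1) * Complex.exp (Complex.I * d) / z))‖)
    (hsum'' : Summable fun l : ℤ =>
      ‖(q : ℂ) ^ l * ((g ((q : ℂ) * ((q : ℂ) ^ l * Complex.exp (Complex.I * d))) -
            g ((q : ℂ) ^ l * Complex.exp (Complex.I * d))) / ((q : ℂ) - 1)) /
        (z * qExp q ((q : ℂ) ^ (l + 1) * Complex.exp (Complex.I * d) / z))‖) :
    z * qLaplace q d (fun ζ => (g ((q : ℂ) * ζ) - g ζ) / ((q : ℂ) - 1)) z =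
      (1 / (q : ℂ)) * qLaplace q d (fun ζ => ζ * g ζ) z -
        (1 / (q : ℂ)) * z * qLaplace q d g z := by
  have key := mul_tsum_qLaplaceTerm_qDiff hq hz hden hsum.of_norm hsum'.of_norm hsum''.of_norm
  have hq0 : (q : ℂ) ≠ 0 := by exact_mod_cast (zero_lt_one.trans hq).ne'
  have hq1 : (q : ℂ) - 1 ≠ 0 := sub_ne_zero.mpr (by exact_mod_cast hq.ne')
  simp only [qLaplace_eq_tsum]
  field_simp
  linear_combination key
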